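/- Let Z be a finite set of cardinality m ≥ 1, let n ≥ 1, and let z_1,…,z_n be any sequence of elements of Z. For t = 1,…,n let N_t(z) = #{ s < t : z_s = z } be the number of occurrences of z strictly before time t. Then Σ_{t=1}^n 1 / sqrt( max(N_t(z_t), 1) ) ≤ 3 Σ_{z∈Z} sqrt( N_{n+1}(z) ) ≤ 3 sqrt( m·n ). -/

import Mathlib

/-!
Split the sum according to the value `c = z_t`. Along the times at which `c` occurs the counts
`N_t(c)` run through `0, 1, …, K - 1` with `K = N_{n+1}(c)`, so the fibre of `c` contributes
`∑_{k < K} 1/√(max k 1) ≤ 3√K`, by telescoping against `1/√k ≤ 3(√(k+1) - √k)`. Finally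
`∑_c √(N_{n+1}(c)) ≤ √(m n)` is Cauchy–Schwarz together with `∑_c N_{n+1}(c) = n`.
-/

open Finset

namespace Finset

variable {α M : Type*} [LinearOrder α] [AddCommMonoid M]

theorem sum_comp_card_filter_lt (S : Finset α) (g : ℕ → M) :
    ∑ t ∈ S, g #{s ∈ S | s < t} = ∑ k ∈ range #S, g k := by
  induction S using Finset.induction_on_max with
  | empty => simp
  | insert a S ha ih =>
    have haS : a ∉ S := fun h => lt_irrefl a (ha a h)
    have hrank_a : #{s ∈ insert a S | s < a} = #S := by
      rw [filter_insert, if_neg (lt_irrefl a), filter_true_of_mem ha]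
    have hrank_S : ∀ t ∈ S, #{s ∈ insert a S | s < t} = #{s ∈ S | s < t} := fun t ht => by
      rw [filter_insert, if_neg (not_lt.2 (ha t ht).le)]
    rw [sum_insert haS, card_insert_of_notMem haS, sum_range_succ, hrank_a,
      sum_congr rfl fun t ht => by rw [hrank_S t ht], ih, add_comm]

theorem sum_comp_card_prior_occurrences {β : Type*} [Fintype β] [DecidableEq β]
    (S : Finset α) (z : α → β) (g : ℕ → M) :
    ∑ t ∈ S, g #{s ∈ S | s < t ∧ z s = z t} = ∑ c, ∑ k ∈ range #{s ∈ S | z s = c}, g k := by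
  rw [← sum_fiberwise S z]
  refine sum_congr rfl fun c _ => ?_
  rw [← sum_comp_card_filter_lt]
  refine sum_congr rfl fun t ht => ?_
  rw [(mem_filter.1 ht).2, filter_filter]
  congr 2
  ext s
  simp only [mem_filter]
  tauto

end Finset

theorem inv_sqrt_le_three_mul_sqrt_add_one_sub_sqrt {x : ℝ} (hx : 1 ≤ x) :
    1 / √x ≤ 3 * (√(x + 1) - √x) := by
  have ha : 1 ≤ √x := Real.one_le_sqrt.2 hx
  have hab : √x ≤ √(x + 1) := Real.sqrt_le_sqrt (by linarith)
  have hb : √(x + 1) ≤ 2 * √x := by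
    rw [Real.sqrt_le_left (by positivity), mul_pow, Real.sq_sqrt (by linarith)]
    linarith
  have hdiff : (√(x + 1) - √x) * (√(x + 1) + √x) = 1 := by
    linear_combination Real.sq_sqrt (by linarith : 0 ≤ x + 1) - Real.sq_sqrt (by linarith : 0 ≤ x)
  rw [div_le_iff₀ (by linarith)]
  nlinarith

theorem sum_range_inv_sqrt_max_one_le (K : ℕ) :
    ∑ k ∈ range K, 1 / √((max k 1 : ℕ) : ℝ) ≤ 3 * √K := by
  induction K with
  | zero => simp
  | succ K ih =>
    rw [sum_range_succ, Nat.cast_succ]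
    rcases Nat.eq_zero_or_pos K with rfl | hK
    · norm_num
    · have := inv_sqrt_le_three_mul_sqrt_add_one_sub_sqrt (x := K) (by exact_mod_cast hK)
      rw [max_eq_left hK]
      linarith

theorem Real.sum_sqrt_le_sqrt_card_mul_sum {ι : Type*} (s : Finset ι) {f : ι → ℝ}
    (hf : ∀ i, 0 ≤ f i) : ∑ i ∈ s, √(f i) ≤ √(#s * ∑ i ∈ s, f i) := by
  simpa [Real.sqrt_mul (Nat.cast_nonneg _)] using
    Real.sum_sqrt_mul_sqrt_le s (f := fun _ => 1) (fun _ => zero_le_one) hf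

theorem stmt_18_general {Z : Type*} [Fintype Z] [DecidableEq Z]
    (n : ℕ) (z : ℕ → Z) :
    (∑ t ∈ Finset.Icc 1 n,
        1 / Real.sqrt ((max ((Finset.Ico 1 t).filter (fun s => z s = z t)).card 1 : ℕ) : ℝ)
      ≤ 3 * ∑ c : Z,
          Real.sqrt ((((Finset.Ico 1 (n + 1)).filter (fun s => z s = c)).card : ℝ))) ∧
    3 * (∑ c : Z,
        Real.sqrt ((((Finset.Ico 1 (n + 1)).filter (fun s => z s = c)).card : ℝ)))
      ≤ 3 * Real.sqrt ((Fintype.card Z : ℝ) * (n : ℝ)) := by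
  rw [Ico_add_one_right_eq_Icc]
  have hprior : ∀ t ∈ Icc 1 n, {s ∈ Ico 1 t | z s = z t} = {s ∈ Icc 1 n | s < t ∧ z s = z t} :=
    fun t ht => by
      ext s
      simp only [mem_filter, mem_Ico, mem_Icc] at ht ⊢
      grind
  constructor
  · calc _ = ∑ c, ∑ k ∈ range #{s ∈ Icc 1 n | z s = c}, 1 / √((max k 1 : ℕ) : ℝ) :=
          (sum_congr rfl fun t ht => by rw [hprior t ht]).trans
            (sum_comp_card_prior_occurrences _ z fun k => 1 / √((max k 1 : ℕ) : ℝ))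
      _ ≤ _ := by
          rw [mul_sum]
          exact sum_le_sum fun c _ => sum_range_inv_sqrt_max_one_le _
  · gcongr
    calc ∑ c, √(#{s ∈ Icc 1 n | z s = c} : ℝ)
        ≤ √(#(univ : Finset Z) * ∑ c, (#{s ∈ Icc 1 n | z s = c} : ℝ)) :=
          Real.sum_sqrt_le_sqrt_card_mul_sum _ fun _ => Nat.cast_nonneg _
      _ = √(Fintype.card Z * n) := by
          rw [← Nat.cast_sum, ← card_eq_sum_card_fiberwise fun _ _ => mem_univ _, card_univ,
            Nat.card_Icc, Nat.add_sub_cancel]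

/-- Pigeonhole bound for cumulative `1/√N_t` widths: for any sequence
`z_1,…,z_n` in a finite set `Z` of cardinality `m`, with `N_t(z)` the number of
occurrences of `z` strictly before time `t`,
`∑_t 1/√(max(N_t(z_t),1)) ≤ 3 ∑_z √(N_{n+1}(z)) ≤ 3 √(m n)`. -/
theorem stmt_18 {Z : Type*} [Fintype Z] [DecidableEq Z] [Nonempty Z]
    (n : ℕ) (hn : 1 ≤ n) (z : ℕ → Z) :
    (∑ t ∈ Finset.Icc 1 n,
        1 / Real.sqrt ((max ((Finset.Ico 1 t).filter (fun s => z s = z t)).card 1 : ℕ) : ℝ)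
      ≤ 3 * ∑ c : Z,
          Real.sqrt ((((Finset.Ico 1 (n + 1)).filter (fun s => z s = c)).card : ℝ))) ∧
    3 * (∑ c : Z,
        Real.sqrt ((((Finset.Ico 1 (n + 1)).filter (fun s => z s = c)).card : ℝ)))
      ≤ 3 * Real.sqrt ((Fintype.card Z : ℝ) * (n : ℝ)) :=
  stmt_18_general n z
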